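/- Let (X,d) be a compact metric space and f : X → X a homeomorphism. If (X,f) is not minimal and has the gluing orbit property, then there exist points x, y ∈ X and ε > 0 such that: d(f^n(x), x) ≥ ε for every nonzero integer n; d(f^n(x), y) ≥ ε for every integer n ≥ 0; d(f^n(y), x) ≥ ε for every integer n ≥ 0; and d(f^n(y), y) ≥ ε for every integer n > 0. -/

import Mathlib

open Filter Set Metric

namespace Paper

variable {X : Type*}

/-- Integer iteration of a homeomorphism: `f^n` for `n : ℤ`. -/
def zIter [TopologicalSpace X] (f : X ≃ₜ X) (n : ℤ) (x : X) : X :=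
  if 0 ≤ n then (⇑f)^[n.toNat] x else (⇑f.symm)^[(-n).toNat] x

/-- `(X,f)` is minimal: every (two-sided) orbit is dense. -/
def Minimal [TopologicalSpace X] (f : X ≃ₜ X) : Prop :=
  ∀ x : X, Dense (Set.range fun n : ℤ => zIter f n x)

/-- Topological transitivity. -/
def TopTransitive [TopologicalSpace X] (f : X ≃ₜ X) : Prop :=
  ∀ U V : Set X, IsOpen U → IsOpen V → U.Nonempty → V.Nonempty →
    ∃ n : ℤ, (U ∩ (zIter f n) ⁻¹' V).Nonempty

/-- Equicontinuity of the family of forward iterates. -/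
def EquicontinuousSystem [MetricSpace X] (f : X → X) : Prop :=
  ∀ ε : ℝ, 0 < ε → ∃ δ : ℝ, 0 < δ ∧
    ∀ x y : X, dist x y < δ → ∀ n : ℕ, dist (f^[n] x) (f^[n] y) < ε

/-- The transition times `s_j` (0-indexed: `s 0 = 0`,
`s (j+1) = s j + m_j + t_j - 1`) for an orbit sequence `C` (with lengths `m_j = (C j).2`)
and a gap `g`. -/
def sTimes (C : ℕ → X × ℕ) (g : ℕ → ℕ) : ℕ → ℕ
  | 0 => 0
  | j + 1 => sTimes C g j + (C j).2 + g j - 1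

/-- `(C, g)` (an orbit sequence of rank `k` together with a gap) is `ε`-shadowed by `z`. -/
def Shadows [MetricSpace X] (f : X → X) (k : ℕ) (C : ℕ → X × ℕ) (g : ℕ → ℕ)
    (ε : ℝ) (z : X) : Prop :=
  ∀ j < k, ∀ l < (C j).2, dist (f^[sTimes C g j + l] z) (f^[l] (C j).1) < ε

/-- The gluing orbit property. -/
def GluingOrbit [MetricSpace X] (f : X → X) : Prop :=
  ∀ ε : ℝ, 0 < ε → ∃ M : ℕ, 0 < M ∧
    ∀ k : ℕ, 0 < k → ∀ C : ℕ → X × ℕ, (∀ j < k, 0 < (C j).2) →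
      ∃ g : ℕ → ℕ, (∀ j < k - 1, 0 < g j ∧ g j ≤ M) ∧
        ∃ z : X, Shadows f k C g ε z

/-- The specification property, at scale `ε` with constant `M`. -/
def SpecWith [MetricSpace X] (f : X → X) (ε : ℝ) (M : ℕ) : Prop :=
  ∀ k : ℕ, 0 < k → ∀ C : ℕ → X × ℕ, (∀ j < k, 0 < (C j).2) →
    ∀ g : ℕ → ℕ, (∀ j < k - 1, M ≤ g j) →
      ∃ z : X, Shadows f k C g ε z

/-- The specification property. -/
def Specification [MetricSpace X] (f : X → X) : Prop :=
  ∀ ε : ℝ, 0 < ε → ∃ M : ℕ, 0 < M ∧ SpecWith f ε M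

/-- The periodic gluing orbit property. -/
def PerGluingOrbit [MetricSpace X] (f : X → X) : Prop :=
  ∀ ε : ℝ, 0 < ε → ∃ M : ℕ, 0 < M ∧
    ∀ k : ℕ, 0 < k → ∀ C : ℕ → X × ℕ, (∀ j < k, 0 < (C j).2) →
      ∃ t : ℕ, 0 < t ∧ t ≤ M ∧
        ∃ g : ℕ → ℕ, (∀ j < k - 1, 0 < g j ∧ g j ≤ M) ∧
          ∃ z : X, Shadows f k C g ε z ∧
            f^[sTimes C g (k - 1) + (C (k - 1)).2 + t] z = z

/-- `E` is an `(n,ε)`-separated set. -/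
def IsSepSet [MetricSpace X] (f : X → X) (n : ℕ) (ε : ℝ) (E : Set X) : Prop :=
  ∀ x ∈ E, ∀ y ∈ E, x ≠ y → ∃ k < n, ε < dist (f^[k] x) (f^[k] y)

/-- `s(n,ε)`: the maximal cardinality of an `(n,ε)`-separated subset of `X`. -/
noncomputable def sepNum [MetricSpace X] (f : X → X) (n : ℕ) (ε : ℝ) : ℕ :=
  sSup {N : ℕ | ∃ E : Finset X, IsSepSet f n ε ↑E ∧ E.card = N}

/-- Topological entropy `h(f) = lim_{ε → 0⁺} limsup_n (ln s(n,ε))/n`; since the inner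
quantity is monotone as `ε` decreases, the limit equals the supremum over `ε > 0`. -/
noncomputable def topEnt [MetricSpace X] (f : X → X) : EReal :=
  ⨆ (ε : ℝ) (_ : 0 < ε),
    Filter.limsup (fun n : ℕ => ((Real.log (sepNum f n ε) / n : ℝ) : EReal)) Filter.atTop

/-- The set of periodic points of period at most `n`. -/
def perPts (f : X → X) (n : ℕ) : Set X :=
  {x | ∃ m : ℕ, 0 < m ∧ m ≤ n ∧ f^[m] x = x}

open Classical in
/-- `p(f) = limsup_n (ln p_n(f))/n`, the exponential growth rate of periodic points
(`⊤` contributions when there are infinitely many such points). -/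
noncomputable def perGrowth (f : X → X) : EReal :=
  Filter.limsup (fun n : ℕ =>
      if h : (perPts f n).Finite then ((Real.log (perPts f n).ncard / n : ℝ) : EReal) else ⊤)
    Filter.atTop

/-- The lower box dimension of `X`, `liminf_{ε→0⁺} ln s(1,ε) / (-ln ε)`. -/
noncomputable def lowerBoxDim [MetricSpace X] (f : X → X) : EReal :=
  Filter.liminf (fun ε : ℝ => ((Real.log (sepNum f 1 ε) / (-Real.log ε) : ℝ) : EReal))
    (nhdsWithin 0 (Set.Ioi 0))

/-! Semiflow case -/

/-- `φ` is a continuous semiflow on `X` (for nonnegative times). -/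
def IsSemiflow [TopologicalSpace X] (φ : ℝ → X → X) : Prop :=
  (∀ x : X, φ 0 x = x) ∧
    (∀ s t : ℝ, 0 ≤ s → 0 ≤ t → ∀ x : X, φ (s + t) x = φ s (φ t x)) ∧
      Continuous fun p : ℝ × X => φ p.1 p.2

/-- Minimality of a semiflow: every forward orbit is dense. -/
def MinimalFlow [TopologicalSpace X] (φ : ℝ → X → X) : Prop :=
  ∀ x : X, Dense {y : X | ∃ t : ℝ, 0 ≤ t ∧ φ t x = y}

/-- Transition times for the semiflow gluing: `s 0 = 0`, `s (j+1) = s j + m_j + t_j`. -/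
def sFlow (C : ℕ → X × ℝ) (g : ℕ → ℝ) : ℕ → ℝ
  | 0 => 0
  | j + 1 => sFlow C g j + (C j).2 + g j

/-- Gluing orbit property for a semiflow. -/
def GluingFlow [MetricSpace X] (φ : ℝ → X → X) : Prop :=
  ∀ ε : ℝ, 0 < ε → ∃ M : ℝ, 0 < M ∧
    ∀ k : ℕ, 0 < k → ∀ C : ℕ → X × ℝ, (∀ j < k, 0 ≤ (C j).2) →
      ∃ g : ℕ → ℝ, (∀ j < k - 1, 0 ≤ g j ∧ g j ≤ M) ∧
        ∃ z : X, ∀ j < k, ∀ t ∈ Set.Icc (0 : ℝ) (C j).2,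
          dist (φ (sFlow C g j + t) z) (φ t (C j).1) < ε

/-- `E` is a `(T,ε)`-separated set for the semiflow `φ`. -/
def IsSepFlow [MetricSpace X] (φ : ℝ → X → X) (T ε : ℝ) (E : Set X) : Prop :=
  ∀ x ∈ E, ∀ y ∈ E, x ≠ y → ∃ t ∈ Set.Icc (0 : ℝ) T, ε < dist (φ t x) (φ t y)

/-- `s(T,ε)` for the semiflow. -/
noncomputable def sepFlow [MetricSpace X] (φ : ℝ → X → X) (T ε : ℝ) : ℕ :=
  sSup {N : ℕ | ∃ E : Finset X, IsSepFlow φ T ε ↑E ∧ E.card = N}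

/-- Topological entropy of a semiflow. -/
noncomputable def topEntFlow [MetricSpace X] (φ : ℝ → X → X) : EReal :=
  ⨆ (ε : ℝ) (_ : 0 < ε),
    Filter.limsup (fun T : ℝ => ((Real.log (sepFlow φ T ε) / T : ℝ) : EReal)) Filter.atTop

/-!
Let `p` have a non-dense orbit with closure `Y`, pick `q ∉ Y`, and let `K ∋ q` and `U ⊇ Y` be
disjoint closed `ε`-neighbourhoods; let `M` bound the gaps of the gluing at scale `ε`.
Gluing a long orbit segment of `p`, the point `q` and another long orbit segment of `p`, and
passing to a limit by compactness, gives `x ∈ K` with `f^n x ∈ U` for all `|n| ≥ M`. Gluing many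
copies of `q` followed by a long orbit segment of `p` gives points of `K` that return to `K` in
every backward time window `[m, M m]`; this survives the limit, giving `y ∈ K` with `f^n y ∈ U`
for `n ≥ M` whose backward orbit returns to `K` infinitely often. Thus `x` and `y` are not
periodic and `y` is not on the orbit of `x`; since only finitely many of the relevant orbit points
lie outside `U`, all the required distances are bounded below by a positive constant.
-/

section Iterates

variable [TopologicalSpace X] (f : X ≃ₜ X)

theorem zIter_eq_zpow (n : ℤ) (x : X) : zIter f n x = (f.toEquiv ^ n) x := by
  rcases n with m | m
  · simp [zIter, Equiv.Perm.coe_pow]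
  · rw [zpow_negSucc, zIter, if_neg (Int.negSucc_lt_zero m).not_ge, ← inv_pow,
      Equiv.Perm.coe_pow]
    rfl

theorem zIter_add (m n : ℤ) (x : X) : zIter f m (zIter f n x) = zIter f (m + n) x := by
  simp only [zIter_eq_zpow, zpow_add, Equiv.Perm.mul_apply]

theorem zIter_natCast (n : ℕ) (x : X) : zIter f n x = f^[n] x := by
  simp [zIter]

theorem zIter_neg_natCast_iterate {a b : ℕ} (h : b ≤ a) (x : X) :
    zIter f (-b) (f^[a] x) = f^[a - b] x := by
  rw [← zIter_natCast f a, zIter_add, ← zIter_natCast]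
  congr 1
  omega

theorem zIter_mul_eq_self {n : ℤ} {x : X} (h : zIter f n x = x) (k : ℤ) :
    zIter f (n * k) x = x := by
  rw [zIter_eq_zpow] at h ⊢
  rw [zpow_mul]
  exact Equiv.Perm.zpow_apply_eq_self_of_apply_eq_self h k

theorem continuous_zIter (n : ℤ) : Continuous (zIter f n) := by
  unfold zIter
  split
  · exact f.continuous.iterate _
  · exact f.symm.continuous.iterate _

end Iterates

theorem add_le_and_le_add_mul_of_forall_step {s : ℕ → ℕ} {M n : ℕ}
    (hs : ∀ i < n, s i + 1 ≤ s (i + 1) ∧ s (i + 1) ≤ s i + M) {a : ℕ} (ha : a ≤ n) :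
    s (n - a) + a ≤ s n ∧ s n ≤ s (n - a) + M * a := by
  induction a with
  | zero => simp
  | succ a ih =>
    obtain ⟨ih₁, ih₂⟩ := ih (by omega)
    have hstep := hs (n - (a + 1)) (by omega)
    rw [show n - (a + 1) + 1 = n - a by omega] at hstep
    constructor <;> nlinarith

theorem exists_forall_mem_of_forall_le [TopologicalSpace X] [CompactSpace X] {t : ℕ → Set X}
    (hcl : ∀ n, IsClosed (t n)) (h : ∀ N, ∃ x, ∀ n ≤ N, x ∈ t n) : ∃ x, ∀ n, x ∈ t n := by
  have hcl' : ∀ N, IsClosed (dissipate t N) := fun N => isClosed_biInter fun n _ => hcl n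
  obtain ⟨x, hx⟩ := IsCompact.nonempty_iInter_of_sequence_nonempty_isCompact_isClosed
    (dissipate t) (fun N => antitone_dissipate N.le_succ)
    (fun N => by simpa [Set.Nonempty, mem_dissipate] using h N) (hcl' 0).isCompact hcl'
  rw [iInter_dissipate] at hx
  exact ⟨x, mem_iInter.1 hx⟩

theorem exists_pos_forall_le_dist [MetricSpace X] {ι : Type*} {T : Set ι} {u : ι → X} {b : X}
    {U : Set X} (hU : IsClosed U) (hb : b ∉ U) (hfin : {i ∈ T | u i ∉ U}.Finite)
    (hne : ∀ i ∈ T, u i ≠ b) : ∃ ε : ℝ, 0 < ε ∧ ∀ i ∈ T, ε ≤ dist (u i) b := by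
  have hbF : b ∉ U ∪ u '' {i ∈ T | u i ∉ U} := by
    rintro (h | ⟨i, ⟨hi, -⟩, rfl⟩)
    exacts [hb h, hne i hi rfl]
  obtain ⟨ε, hε, hball⟩ :=
    Metric.isOpen_iff.1 (hU.union (hfin.image u).isClosed).isOpen_compl b hbF
  refine ⟨ε, hε, fun i hi => not_lt.1 fun h => hball (mem_ball.2 h) ?_⟩
  by_cases hiU : u i ∈ U
  exacts [Or.inl hiU, Or.inr ⟨i, ⟨hi, hiU⟩, rfl⟩]

section Gluing

variable [MetricSpace X]

def GluesWith (f : X → X) (ε : ℝ) (M : ℕ) : Prop :=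
  ∀ k : ℕ, 0 < k → ∀ C : ℕ → X × ℕ, (∀ j < k, 0 < (C j).2) →
    ∃ g : ℕ → ℕ, (∀ j < k - 1, 0 < g j ∧ g j ≤ M) ∧ ∃ z : X, Shadows f k C g ε z

theorem Shadows.iterate_mem_cthickening {f : X → X} {k : ℕ} {C : ℕ → X × ℕ} {g : ℕ → ℕ}
    {ε : ℝ} {z : X} (h : Shadows f k C g ε z) {j l : ℕ} (hj : j < k) (hl : l < (C j).2)
    {S : Set X} (hS : f^[l] (C j).1 ∈ S) : f^[sTimes C g j + l] z ∈ cthickening ε S :=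
  mem_cthickening_of_dist_le _ _ _ _ hS (h j hj l hl).le

variable {f : X ≃ₜ X} {ε : ℝ} {M : ℕ} {p q : X} {Y : Set X}

theorem GluesWith.exists_approx_two_sided (hg : GluesWith f ε M) (hpY : ∀ l, f^[l] p ∈ Y)
    (q : X) (N : ℕ) :
    ∃ w ∈ cthickening ε {q}, ∀ m ≤ N, zIter f ↑(m + M) w ∈ cthickening ε Y ∧
      zIter f (-↑(m + M)) w ∈ cthickening ε Y := by
  set C : ℕ → X × ℕ := fun j => if j = 1 then (q, 1) else (p, N + M + 1)
  obtain ⟨g, hgM, z, hz⟩ := hg 3 (by norm_num) C fun j _ => by by_cases h : j = 1 <;> simp [C, h]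
  have hg₀ := hgM 0 (by norm_num)
  have hg₁ := hgM 1 (by norm_num)
  have hs₀ : sTimes C g 0 = 0 := rfl
  have hs₁ : sTimes C g 1 = N + M + g 0 := by simp [sTimes, C]
  have hs₂ : sTimes C g 2 = sTimes C g 1 + g 1 := by simp [sTimes, C]
  have hC₀ : C 0 = (p, N + M + 1) := rfl
  have hC₂ : C 2 = (p, N + M + 1) := rfl
  have hwq := hz.iterate_mem_cthickening (j := 1) (l := 0) (by norm_num) (by simp [C])
    (mem_singleton q)
  refine ⟨f^[sTimes C g 1] z, hwq, fun m hm => ⟨?_, ?_⟩⟩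
  · rw [zIter_natCast, ← Function.iterate_add_apply,
      show m + M + sTimes C g 1 = sTimes C g 2 + (m + M - g 1) by omega]
    exact hz.iterate_mem_cthickening (by norm_num) (by rw [hC₂]; omega) (hpY _)
  · rw [zIter_neg_natCast_iterate f (by omega),
      show sTimes C g 1 - (m + M) = sTimes C g 0 + (N + g 0 - m) by omega]
    exact hz.iterate_mem_cthickening (by norm_num) (by rw [hC₀]; omega) (hpY _)

theorem GluesWith.exists_approx_returning (hg : GluesWith f ε M) (hpY : ∀ l, f^[l] p ∈ Y)
    (q : X) (N : ℕ) :
    ∃ w ∈ cthickening ε {q}, ∀ m ≤ N, f^[m + M] w ∈ cthickening ε Y ∧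
      ∃ c ∈ Finset.Icc m (M * m), zIter f (-c) w ∈ cthickening ε {q} := by
  set C : ℕ → X × ℕ := fun j => if j ≤ N then (q, 1) else (p, N + M + 1)
  obtain ⟨g, hgM, z, hz⟩ := hg (N + 2) (by omega) C fun j _ => by
    by_cases h : j ≤ N <;> simp [C, h]
  have hstep : ∀ i < N + 1,
      sTimes C g i + 1 ≤ sTimes C g (i + 1) ∧ sTimes C g (i + 1) ≤ sTimes C g i + M := by
    intro i hi
    have := hgM i (by omega)
    simp only [sTimes, C, if_pos (show i ≤ N by omega)]
    omega
  have hq : ∀ i ≤ N, f^[sTimes C g i] z ∈ cthickening ε {q} := fun i hi =>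
    hz.iterate_mem_cthickening (l := 0) (by omega) (by simp [C, hi]) (by simp [C, hi])
  refine ⟨f^[sTimes C g N] z, hq N le_rfl, fun m hm => ⟨?_, ?_⟩⟩
  · have := hstep N (by omega)
    have hCN : C (N + 1) = (p, N + M + 1) := if_neg (by omega)
    rw [← Function.iterate_add_apply, show m + M + sTimes C g N =
      sTimes C g (N + 1) + (m + M + sTimes C g N - sTimes C g (N + 1)) by omega]
    exact hz.iterate_mem_cthickening (by omega) (by rw [hCN]; omega) (by rw [hCN]; exact hpY _)
  · obtain ⟨h₁, h₂⟩ := add_le_and_le_add_mul_of_forall_step (fun i hi => hstep i (by omega)) hm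
    refine ⟨sTimes C g N - sTimes C g (N - m), Finset.mem_Icc.2 ⟨by omega, by omega⟩, ?_⟩
    rw [zIter_neg_natCast_iterate f (by omega), Nat.sub_sub_self (by omega)]
    exact hq _ (by omega)

variable [CompactSpace X]

theorem GluesWith.exists_two_sided (hg : GluesWith f ε M) (hpY : ∀ l, f^[l] p ∈ Y) (q : X) :
    ∃ x ∈ cthickening ε {q}, ∀ n : ℤ, M ≤ n.natAbs → zIter f n x ∈ cthickening ε Y := by
  obtain ⟨x, hx⟩ := exists_forall_mem_of_forall_le
    (t := fun m => cthickening ε {q} ∩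
      (zIter f ↑(m + M) ⁻¹' cthickening ε Y ∩ zIter f (-↑(m + M)) ⁻¹' cthickening ε Y))
    (fun m => isClosed_cthickening.inter
      ((isClosed_cthickening.preimage (continuous_zIter f _)).inter
        (isClosed_cthickening.preimage (continuous_zIter f _))))
    (fun N => (hg.exists_approx_two_sided hpY q N).imp fun w ⟨hwq, hwY⟩ m hm => ⟨hwq, hwY m hm⟩)
  refine ⟨x, (hx 0).1, fun n hn => ?_⟩
  obtain ⟨m, hm⟩ : ∃ m, n.natAbs = m + M := ⟨n.natAbs - M, by omega⟩
  rcases Int.natAbs_eq n with h | h <;> rw [h, hm]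
  exacts [(hx m).2.1, (hx m).2.2]

theorem GluesWith.exists_returning (hg : GluesWith f ε M) (hpY : ∀ l, f^[l] p ∈ Y) (q : X) :
    ∃ y ∈ cthickening ε {q}, (∀ n, M ≤ n → f^[n] y ∈ cthickening ε Y) ∧
      ∀ B : ℕ, ∃ c, B ≤ c ∧ zIter f (-c) y ∈ cthickening ε {q} := by
  obtain ⟨y, hy⟩ := exists_forall_mem_of_forall_le
    (t := fun m => cthickening ε {q} ∩ (f^[m + M] ⁻¹' cthickening ε Y ∩
      ⋃ c ∈ Finset.Icc m (M * m), zIter f (-c) ⁻¹' cthickening ε {q}))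
    (fun m => isClosed_cthickening.inter
      ((isClosed_cthickening.preimage (f.continuous.iterate _)).inter
        (isClosed_biUnion_finset fun c _ => isClosed_cthickening.preimage (continuous_zIter f _))))
    (fun N => (hg.exists_approx_returning hpY q N).imp fun w ⟨hwq, hwY⟩ m hm =>
      ⟨hwq, (hwY m hm).1, by simpa using (hwY m hm).2⟩)
  refine ⟨y, (hy 0).1, fun n hn => ?_, fun B => ?_⟩
  · simpa [Nat.sub_add_cancel hn] using (hy (n - M)).2.1
  · obtain ⟨c, hc, hcq⟩ := mem_iUnion₂.1 (hy B).2.2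
    exact ⟨c, (Finset.mem_Icc.1 hc).1, hcq⟩

end Gluing

theorem exists_pos_separated [MetricSpace X] (f : X ≃ₜ X) {U : Set X} (hU : IsClosed U)
    {x y : X} {M : ℕ} (hx : x ∉ U) (hxU : ∀ n : ℤ, M ≤ n.natAbs → zIter f n x ∈ U)
    (hy : y ∉ U) (hyU : ∀ n : ℕ, M ≤ n → f^[n] y ∈ U)
    (hyret : ∀ B : ℕ, ∃ c : ℕ, B ≤ c ∧ zIter f (-c) y ∉ U) :
    ∃ ε : ℝ, 0 < ε ∧
      (∀ n : ℤ, n ≠ 0 → ε ≤ dist (zIter f n x) x) ∧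
      (∀ n : ℕ, ε ≤ dist ((⇑f)^[n] x) y) ∧
      (∀ n : ℕ, ε ≤ dist ((⇑f)^[n] y) x) ∧
      (∀ n : ℕ, 0 < n → ε ≤ dist ((⇑f)^[n] y) y) := by
  have hxf : ∀ n : ℕ, M ≤ n → f^[n] x ∈ U := fun n hn => by
    simpa [zIter_natCast] using hxU n (by simpa using hn)
  have hx_aper : ∀ n : ℤ, n ≠ 0 → zIter f n x ≠ x := fun n hn h => hx <| by
    simpa [zIter_mul_eq_self f h] using hxU (n * M) (by
      simpa [Int.natAbs_mul] using Nat.le_mul_of_pos_left M (Int.natAbs_pos.2 hn))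
  have hy_aper : ∀ n : ℕ, 0 < n → f^[n] y ≠ y := fun n hn h => hy <| by
    simpa [(show Function.IsPeriodicPt f n y from h).mul_const M |>.eq] using
      hyU (n * M) (Nat.le_mul_of_pos_left M hn)
  -- The backward orbit of `y` leaves `U` infinitely often; that of `x` eventually stays in `U`.
  have hxy : ∀ n : ℤ, zIter f n x ≠ y := fun n h => by
    obtain ⟨c, hc, hcU⟩ := hyret (n.natAbs + M)
    refine hcU ?_
    rw [← h, zIter_add]
    exact hxU _ (by omega)
  obtain ⟨ε₁, hε₁, h₁⟩ := exists_pos_forall_le_dist (T := {n : ℤ | n ≠ 0})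
    (u := fun n => zIter f n x) hU hx
    ((Set.finite_Ioo (-(M : ℤ)) M).subset fun n ⟨_, hn⟩ =>
      by by_contra h; exact hn (hxU n (by simp at h; omega)))
    hx_aper
  obtain ⟨ε₂, hε₂, h₂⟩ := exists_pos_forall_le_dist (T := univ) (u := fun n => f^[n] x) hU hy
    ((Set.finite_Iio M).subset fun n ⟨_, hn⟩ => not_le.1 fun h => hn (hxf n h))
    fun n _ => by simpa [zIter_natCast] using hxy n
  obtain ⟨ε₃, hε₃, h₃⟩ := exists_pos_forall_le_dist (T := univ) (u := fun n => f^[n] y) hU hx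
    ((Set.finite_Iio M).subset fun n ⟨_, hn⟩ => not_le.1 fun h => hn (hyU n h))
    fun n _ h => hxy (-n) (by rw [← h, zIter_neg_natCast_iterate f le_rfl, Nat.sub_self]; rfl)
  obtain ⟨ε₄, hε₄, h₄⟩ := exists_pos_forall_le_dist (T := {n : ℕ | 0 < n})
    (u := fun n => f^[n] y) hU hy
    ((Set.finite_Iio M).subset fun n ⟨_, hn⟩ => not_le.1 fun h => hn (hyU n h))
    hy_aper
  refine ⟨min (min ε₁ ε₂) (min ε₃ ε₄), by positivity, fun n hn => ?_, fun n => ?_,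
    fun n => ?_, fun n hn => ?_⟩
  · exact (min_le_left _ _).trans ((min_le_left _ _).trans (h₁ n hn))
  · exact (min_le_left _ _).trans ((min_le_right _ _).trans (h₂ n trivial))
  · exact (min_le_right _ _).trans ((min_le_left _ _).trans (h₃ n trivial))
  · exact (min_le_right _ _).trans ((min_le_right _ _).trans (h₄ n hn))

theorem stmt9 [MetricSpace X] [CompactSpace X] (f : X ≃ₜ X)
    (hnm : ¬ Minimal f) (hgo : GluingOrbit (⇑f)) :
    ∃ x y : X, ∃ ε : ℝ, 0 < ε ∧
      (∀ n : ℤ, n ≠ 0 → ε ≤ dist (zIter f n x) x) ∧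
      (∀ n : ℕ, ε ≤ dist ((⇑f)^[n] x) y) ∧
      (∀ n : ℕ, ε ≤ dist ((⇑f)^[n] y) x) ∧
      (∀ n : ℕ, 0 < n → ε ≤ dist ((⇑f)^[n] y) y) := by
  obtain ⟨p, hp⟩ := not_forall.1 hnm
  set Y := closure (range fun n : ℤ => zIter f n p)
  obtain ⟨q, hq⟩ : ∃ q, q ∉ Y := not_forall.1 hp
  have hpY : ∀ l : ℕ, f^[l] p ∈ Y := fun l => subset_closure ⟨l, zIter_natCast f l p⟩
  obtain ⟨ε, hε, hdisj⟩ :=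
    (disjoint_singleton_left.2 hq).exists_cthickenings isCompact_singleton isClosed_closure
  obtain ⟨M, -, hM⟩ := hgo ε hε
  obtain ⟨x, hxq, hxY⟩ := GluesWith.exists_two_sided hM hpY q
  obtain ⟨y, hyq, hyY, hyq'⟩ := GluesWith.exists_returning hM hpY q
  exact ⟨x, y, exists_pos_separated f isClosed_cthickening (hdisj.notMem_of_mem_left hxq) hxY
    (hdisj.notMem_of_mem_left hyq) hyY
    fun B => (hyq' B).imp fun c ⟨hc, hcq⟩ => ⟨hc, hdisj.notMem_of_mem_left hcq⟩⟩

end Paper
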